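/- arXiv:2307.14832 — 2 statements merged into one kernel-verified Lean document; each statement's English description precedes it below -/
import Mathlib

section
/- Let G be a simple graph on n vertices. Then det W_Q(G∘P₂) = ε · a₀ · (det W_Q(G))² for some ε ∈ {1, −1}, where W_Q(G∘P₂) is the 2n×2n Q-walk matrix of the rooted product G∘P₂ and a₀ is the constant term of the characteristic polynomial det(tI − Q(G)). -/
open Matrix Polynomial BigOperators

/-- The signless Laplacian matrix `Q(G) = D(G) + A(G)` of a simple graph. -/
noncomputable def qMat (R : Type) [Ring R] {V : Type} [Fintype V] [DecidableEq V]
    (G : SimpleGraph V) : Matrix V V R :=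
  letI := Classical.decRel G.Adj
  G.degMatrix R + G.adjMatrix R

/-- The determinant of the Q-walk matrix `[e, Qe, …, Q^{m-1}e]` of a graph
(rows indexed by vertices via a fixed enumeration; well defined up to sign). -/
noncomputable def qWalkDet {V : Type} [Fintype V] [DecidableEq V] (G : SimpleGraph V) : ℝ :=
  Matrix.det (Matrix.of fun i j : Fin (Fintype.card V) =>
    ((qMat ℝ G ^ (j : ℕ)) *ᵥ (fun _ => (1 : ℝ))) ((Fintype.equivFin V).symm i))

/-- The rooted product `G ∘ P_k`: a pendant path on `k-1` extra vertices attached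
at each vertex of `G`; level `0` is the copy of `G`. -/
def rootedProd {V : Type} (G : SimpleGraph V) (k : ℕ) : SimpleGraph (V × Fin k) :=
  SimpleGraph.fromRel (fun a b =>
    (a.2 = b.2 ∧ (a.2 : ℕ) = 0 ∧ G.Adj a.1 b.1) ∨ (a.1 = b.1 ∧ (a.2 : ℕ) + 1 = (b.2 : ℕ)))

/-- A graph is determined by its generalized Q-spectrum. -/
def IsDGQS {V : Type} [Fintype V] [DecidableEq V] (G : SimpleGraph V) : Prop :=
  ∀ H : SimpleGraph V,
    (qMat ℝ H).charpoly = (qMat ℝ G).charpoly →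
    (qMat ℝ Hᶜ).charpoly = (qMat ℝ Gᶜ).charpoly →
    Nonempty (H ≃g G)

/-!
After reindexing, `Q(G ∘ P₂) = B = [[Q + 1, 1], [1, 1]]`. With `u = (0, e)` we have `B u = (e, e)`,
so the walk matrix of `B` is `B · K(B, u)` for the Krylov matrix `K(B, u) = [u, B u, …]`, and
`det B = det Q = ±a₀`. A Krylov determinant is unchanged by `B ↦ M = B - 1 = [[Q, 1], [1, 0]]`.
On vectors `(p(Q) e, q(Q) e)` the matrix `M` acts as the Fibonacci matrix `ζ = [[X, 1], [1, 0]]`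
acts on `(p, q)`, and `ζ` is a unit over `ℤ[X]`. For `1 - n ≤ k ≤ n` both entries of `ζ^k (0, 1)`
have degree `< n`, so `M^(k + n - 1) u = M^(n - 1) diag(W, W) θ_k` with `W = W_Q(G)` and integer
coefficient vectors `θ_k`. These form a unimodular matrix, since `X ζ^k = ζ^(k+1) - ζ^(k-1)` expresses every `(X^i, 0)`
and `(0, X^i)` through them. As `det M = ±1`, `det W_B = ±a₀ (det W)²`.
-/

namespace Matrix

variable {ι R : Type*} [Fintype ι] [DecidableEq ι] [CommRing R]

noncomputable def krylov (A : Matrix ι ι R) (v : ι → R) (m : ℕ) : Matrix ι (Fin m) R :=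
  of fun i j => (A ^ (j : ℕ) *ᵥ v) i

lemma col_krylov (A : Matrix ι ι R) (v : ι → R) {m : ℕ} (j : Fin m) :
    (krylov A v m).col j = A ^ (j : ℕ) *ᵥ v :=
  rfl

lemma krylov_mulVec (A : Matrix ι ι R) (v : ι → R) {m : ℕ} (c : Fin m → R) :
    krylov A v m *ᵥ c = ∑ j, c j • (A ^ (j : ℕ) *ᵥ v) := by
  ext i
  simp [krylov, mulVec, dotProduct, Finset.sum_apply, mul_comm]

lemma krylov_mulVec_of_commute {A S : Matrix ι ι R} (h : Commute A S) (v : ι → R) (m : ℕ) :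
    krylov A (S *ᵥ v) m = S * krylov A v m := by
  ext i j
  change (A ^ (j : ℕ) *ᵥ S *ᵥ v) i = (S *ᵥ A ^ (j : ℕ) *ᵥ v) i
  rw [mulVec_mulVec, mulVec_mulVec, (h.pow_left _).eq]

lemma submatrix_equiv_pow {κ : Type*} [Fintype κ] [DecidableEq κ] (A : Matrix ι ι R)
    (e : κ ≃ ι) (k : ℕ) : A.submatrix e e ^ k = (A ^ k).submatrix e e := by
  induction k with
  | zero => simp
  | succ k ih => rw [pow_succ, ih, submatrix_mul_equiv, pow_succ]

lemma krylov_submatrix {κ : Type*} [Fintype κ] [DecidableEq κ] (A : Matrix ι ι R) (v : ι → R)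
    (e : κ ≃ ι) (m : ℕ) : krylov (A.submatrix e e) (v ∘ e) m = (krylov A v m).submatrix e id := by
  ext i j
  simp [krylov, submatrix_equiv_pow, submatrix_mulVec_equiv, Function.comp_assoc]

def binomialMatrix (c : R) (m : ℕ) : Matrix (Fin m) (Fin m) R :=
  of fun i j => ((j : ℕ).choose i : R) * c ^ ((j : ℕ) - i)

lemma det_binomialMatrix (c : R) (m : ℕ) : (binomialMatrix c m).det = 1 := by
  rw [det_of_isUpperTriangular]
  · simp [binomialMatrix]
  · intro i j hij
    simp [binomialMatrix, Nat.choose_eq_zero_of_lt (show (j : ℕ) < i from hij)]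

lemma add_smul_one_pow (A : Matrix ι ι R) (c : R) (k : ℕ) :
    (A + c • 1) ^ k = ∑ i ∈ Finset.range (k + 1), ((k.choose i : R) * c ^ (k - i)) • A ^ i := by
  rw [(Commute.smul_right (Commute.one_right A) c).add_pow]
  refine Finset.sum_congr rfl fun i _ => ?_
  rw [_root_.smul_pow, one_pow, mul_smul_comm, mul_one, ← nsmul_eq_mul',
    ← Nat.cast_smul_eq_nsmul R, smul_smul]

lemma krylov_add_smul_one (A : Matrix ι ι R) (c : R) (v : ι → R) (m : ℕ) :
    krylov (A + c • 1) v m = krylov A v m * binomialMatrix c m := by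
  refine ext_of_mulVec_single fun j => ?_
  rw [← mulVec_mulVec, mulVec_single_one, mulVec_single_one, krylov_mulVec, col_krylov,
    add_smul_one_pow, sum_mulVec]
  simp only [smul_mulVec, col_apply, binomialMatrix, of_apply]
  rw [Fin.sum_univ_eq_sum_range
    (fun i => ((j : ℕ).choose i * c ^ ((j : ℕ) - i)) • (A ^ i *ᵥ v))]
  refine Finset.sum_subset (by simp [j.isLt]) fun i _ hi => ?_
  simp [Nat.choose_eq_zero_of_lt (show (j : ℕ) < i by simpa using hi)]

end Matrix

noncomputable def fibMatrix : (Matrix (Fin 2) (Fin 2) ℤ[X])ˣ where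
  val := !![X, 1; 1, 0]
  inv := !![0, 1; 1, -X]
  val_inv := by simp [Matrix.one_fin_two]
  inv_val := by simp [Matrix.one_fin_two]

/-- `fibVec k = (F_k, F_(k-1))` for the Fibonacci polynomials `F_(k+1) = X F_k + F_(k-1)`,
`F_0 = 0`, `F_1 = 1`, extended to negative indices. -/
noncomputable def fibVec (k : ℤ) : Fin 2 → ℤ[X] :=
  (↑(fibMatrix ^ k) : Matrix (Fin 2) (Fin 2) ℤ[X]) *ᵥ ![0, 1]

lemma fibVec_zero : fibVec 0 = ![0, 1] := by
  simp [fibVec]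

lemma fibVec_add_one (k : ℤ) :
    fibVec (k + 1) = ![X * fibVec k 0 + fibVec k 1, fibVec k 0] := by
  rw [fibVec, add_comm, _root_.zpow_one_add, Units.val_mul, ← mulVec_mulVec, ← fibVec]
  ext i
  fin_cases i <;> simp [fibMatrix, mulVec, dotProduct, Fin.sum_univ_two]

lemma fibVec_one : fibVec 1 = ![1, 0] := by
  simpa [fibVec_zero] using fibVec_add_one 0

lemma fibVec_sub_one (k : ℤ) :
    fibVec (k - 1) = ![fibVec k 1, fibVec k 0 - X * fibVec k 1] := by
  have h := fibVec_add_one (k - 1)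
  rw [sub_add_cancel] at h
  ext i
  fin_cases i <;> simp [h]

lemma X_smul_fibVec (k : ℤ) : (X : ℤ[X]) • fibVec k = fibVec (k + 1) - fibVec (k - 1) := by
  ext i
  fin_cases i <;> simp [fibVec_add_one, fibVec_sub_one]

lemma natDegree_X_mul_le_succ {S : Type*} [Semiring S] {p : S[X]} {k : ℕ}
    (hp : p.natDegree ≤ k) : (X * p).natDegree ≤ k + 1 := by
  grw [natDegree_mul_le, natDegree_X_le, hp, add_comm]

lemma natDegree_fibVec_natCast_add_one_le (k : ℕ) (i : Fin 2) :
    (fibVec (k + 1) i).natDegree ≤ k := by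
  induction k generalizing i with
  | zero => fin_cases i <;> simp [fibVec_one]
  | succ k ih =>
    rw [Nat.cast_succ, fibVec_add_one]
    fin_cases i
    · exact natDegree_add_le_of_degree_le (natDegree_X_mul_le_succ (ih 0))
        ((ih 1).trans k.le_succ)
    · exact (ih 0).trans k.le_succ

lemma natDegree_fibVec_neg_natCast_le (k : ℕ) (i : Fin 2) :
    (fibVec (-k) i).natDegree ≤ k := by
  induction k generalizing i with
  | zero => fin_cases i <;> simp [fibVec_zero]
  | succ k ih =>
    rw [Nat.cast_succ, neg_add, ← sub_eq_add_neg, fibVec_sub_one]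
    fin_cases i
    · exact (ih 1).trans k.le_succ
    · exact (natDegree_sub_le _ _).trans
        (max_le ((ih 0).trans k.le_succ) (natDegree_X_mul_le_succ (ih 1)))

lemma natDegree_fibVec_lt {n : ℕ} {k : ℤ} (hk : k ∈ Set.Icc (1 - (n : ℤ)) n) (i : Fin 2) :
    (fibVec k i).natDegree < n := by
  obtain ⟨h1, h2⟩ := hk
  rcases le_or_gt 1 k with h | h
  · obtain ⟨j, rfl⟩ : ∃ j : ℕ, k = j + 1 := ⟨(k - 1).toNat, by omega⟩
    exact (natDegree_fibVec_natCast_add_one_le j i).trans_lt (by omega)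
  · obtain ⟨j, rfl⟩ : ∃ j : ℕ, k = -j := ⟨(-k).toNat, by omega⟩
    exact (natDegree_fibVec_neg_natCast_le j i).trans_lt (by omega)

lemma X_pow_smul_fibVec_mem_span (i : ℕ) (a : ℤ) :
    (X ^ i : ℤ[X]) • fibVec a ∈ Submodule.span ℤ (fibVec '' Set.Icc (a - i) (a + i)) := by
  induction i generalizing a with
  | zero => exact Submodule.subset_span ⟨a, by simp, by simp⟩
  | succ i ih =>
    rw [pow_succ, mul_smul, X_smul_fibVec, smul_sub]
    refine Submodule.sub_mem _ (Submodule.span_mono ?_ (ih _)) (Submodule.span_mono ?_ (ih _)) <;>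
      exact Set.image_mono (Set.Icc_subset_Icc (by push_cast; omega) (by push_cast; omega))

def coeffPair (n : ℕ) : (Fin 2 → ℤ[X]) →ₗ[ℤ] Fin n ⊕ Fin n → ℤ where
  toFun w := Sum.elim (fun i => (w 0).coeff i) (fun i => (w 1).coeff i)
  map_add' w w' := by ext (i | i) <;> simp
  map_smul' c w := by ext (i | i) <;> simp

noncomputable def fibCoeffMatrix (n : ℕ) : Matrix (Fin n ⊕ Fin n) (Fin n ⊕ Fin n) ℤ :=
  of fun r c => coeffPair n (fibVec ((finSumFinEquiv c : ℕ) + 1 - n)) r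

lemma coeffPair_fibVec_mem_range_col {n : ℕ} {k : ℤ} (hk : k ∈ Set.Icc (1 - (n : ℤ)) n) :
    coeffPair n (fibVec k) ∈ Set.range (fibCoeffMatrix n).col := by
  obtain ⟨h1, h2⟩ := hk
  refine ⟨finSumFinEquiv.symm ⟨(k + n - 1).toNat, by omega⟩, ?_⟩
  ext r
  simp only [col_apply, fibCoeffMatrix, of_apply, Equiv.apply_symm_apply]
  rw [show ((k + n - 1).toNat : ℤ) + 1 - n = k by omega]

lemma coeffPair_X_pow_smul_fibVec_mem_span {n i : ℕ} {a : ℤ} (h1 : 1 - (n : ℤ) ≤ a - i)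
    (h2 : a + i ≤ n) :
    coeffPair n ((X ^ i : ℤ[X]) • fibVec a) ∈
      Submodule.span ℤ (Set.range (fibCoeffMatrix n).col) := by
  refine Submodule.span_mono ?_
    (Submodule.apply_mem_span_image_of_mem_span _ (X_pow_smul_fibVec_mem_span i a))
  rintro _ ⟨_, ⟨k, ⟨hk1, hk2⟩, rfl⟩, rfl⟩
  exact coeffPair_fibVec_mem_range_col ⟨by omega, by omega⟩

lemma isUnit_fibCoeffMatrix (n : ℕ) : IsUnit (fibCoeffMatrix n) := by
  rw [← mulVec_surjective_iff_isUnit]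
  change Function.Surjective (fibCoeffMatrix n).mulVecLin
  rw [← LinearMap.range_eq_top, range_mulVecLin, eq_top_iff,
    ← (Pi.basisFun ℤ (Fin n ⊕ Fin n)).span_eq, Submodule.span_le]
  -- `(X^i, 0) = X^i • fibVec 1` and `(0, X^i) = X^i • fibVec 0`
  rintro _ ⟨(i | i), rfl⟩ <;> rw [SetLike.mem_coe]
  · convert coeffPair_X_pow_smul_fibVec_mem_span (n := n) (i := i) (a := 1) (by omega) (by omega)
      using 1
    ext (j | j) <;>
      simp [coeffPair, fibVec_one, coeff_X_pow, Pi.single_apply, Fin.ext_iff, eq_comm]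
  · convert coeffPair_X_pow_smul_fibVec_mem_span (n := n) (i := i) (a := 0) (by omega) (by omega)
      using 1
    ext (j | j) <;>
      simp [coeffPair, fibVec_zero, coeff_X_pow, Pi.single_apply, Fin.ext_iff, eq_comm]

section

variable {R : Type*} [CommRing R] {n : ℕ} (Q : Matrix (Fin n) (Fin n) R)

noncomputable def evalPair (w : Fin 2 → ℤ[X]) : Fin n ⊕ Fin n → R :=
  Sum.elim (aeval Q (w 0) *ᵥ 1) (aeval Q (w 1) *ᵥ 1)

lemma evalPair_fibVec_zero : evalPair Q (fibVec 0) = Sum.elim (0 : Fin n → R) 1 := by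
  simp [evalPair, fibVec_zero]

lemma fromBlocks_mulVec_evalPair (w : Fin 2 → ℤ[X]) :
    fromBlocks Q 1 1 0 *ᵥ evalPair Q w = evalPair Q ![X * w 0 + w 1, w 0] := by
  simp [evalPair, fromBlocks_mulVec, add_mulVec, mulVec_mulVec]

lemma fromBlocks_pow_mulVec_evalPair_fibVec (k : ℕ) (j : ℤ) :
    fromBlocks Q 1 1 0 ^ k *ᵥ evalPair Q (fibVec j) = evalPair Q (fibVec (j + k)) := by
  induction k with
  | zero => simp
  | succ k ih =>
    rw [pow_succ', ← mulVec_mulVec, ih, fromBlocks_mulVec_evalPair, ← fibVec_add_one,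
      Nat.cast_succ, add_assoc]

lemma aeval_mulVec_eq_krylov_mulVec {p : ℤ[X]} (hp : p.natDegree < n) (v : Fin n → R) :
    aeval Q p *ᵥ v = krylov Q v n *ᵥ fun i => (p.coeff i : R) := by
  rw [aeval_eq_sum_range' hp, krylov_mulVec, sum_mulVec,
    ← Fin.sum_univ_eq_sum_range (fun i => (p.coeff i • Q ^ i) *ᵥ v)]
  simp only [← Int.cast_smul_eq_zsmul R, smul_mulVec]

lemma evalPair_eq_mulVec {w : Fin 2 → ℤ[X]} (hw : ∀ i, (w i).natDegree < n) :
    evalPair Q w =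
      fromBlocks (krylov Q 1 n) 0 0 (krylov Q 1 n) *ᵥ fun r => (coeffPair n w r : R) := by
  rw [fromBlocks_mulVec, evalPair, aeval_mulVec_eq_krylov_mulVec Q (hw 0),
    aeval_mulVec_eq_krylov_mulVec Q (hw 1)]
  simp only [zero_mulVec, add_zero, zero_add]
  rfl

lemma krylov_fromBlocks_one_one_zero :
    (krylov (fromBlocks Q 1 1 0) (Sum.elim (0 : Fin n → R) 1) (n + n)).submatrix id
        finSumFinEquiv =
      fromBlocks Q 1 1 0 ^ (n - 1) * fromBlocks (krylov Q 1 n) 0 0 (krylov Q 1 n) *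
        (fibCoeffMatrix n).map (Int.castRingHom R) := by
  refine ext_of_mulVec_single fun c => ?_
  set j : ℕ := (finSumFinEquiv c : ℕ)
  have hj : j < n + n := (finSumFinEquiv c).isLt
  have hcol : ((fibCoeffMatrix n).map (Int.castRingHom R)).col c =
      fun r => (coeffPair n (fibVec (j + 1 - n)) r : R) := rfl
  have hshift : (j + 1 - n : ℤ) + (n - 1 : ℕ) = 0 + j := by omega
  rw [← mulVec_mulVec, mulVec_single_one, mulVec_single_one, ← mulVec_mulVec, hcol,
    ← evalPair_eq_mulVec Q (natDegree_fibVec_lt ⟨by omega, by omega⟩),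
    fromBlocks_pow_mulVec_evalPair_fibVec, hshift, ← fromBlocks_pow_mulVec_evalPair_fibVec,
    evalPair_fibVec_zero]
  rfl

end

section

variable {R : Type*} [CommRing R] [LinearOrder R] [IsStrictOrderedRing R] {n : ℕ}

lemma abs_det_map_fibCoeffMatrix :
    |((fibCoeffMatrix n).map (Int.castRingHom R)).det| = 1 := by
  rw [← RingHom.mapMatrix_apply, ← RingHom.map_det]
  rcases Int.isUnit_iff.mp ((isUnit_iff_isUnit_det _).mp (isUnit_fibCoeffMatrix n)) with h | h <;>
    simp [h]

lemma abs_det_fromBlocks_one_one_zero {m : Type*} [Fintype m] [DecidableEq m]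
    (A : Matrix m m R) : |(fromBlocks A 1 1 (0 : Matrix m m R)).det| = 1 := by
  rw [← abs_det_submatrix_equiv_equiv (Equiv.refl _) (Equiv.sumComm _ _)]
  simp [fromBlocks_submatrix_sum_swap_right]

lemma abs_det_krylov_fromBlocks_add_one (Q : Matrix (Fin n) (Fin n) R) :
    |((krylov (fromBlocks (Q + 1) 1 1 1) 1 (n + n)).submatrix id finSumFinEquiv).det| =
      |Q.det| * |(krylov Q 1 n).det| ^ 2 := by
  set B : Matrix (Fin n ⊕ Fin n) (Fin n ⊕ Fin n) R := fromBlocks (Q + 1) 1 1 1 with hB_def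
  set M : Matrix (Fin n ⊕ Fin n) (Fin n ⊕ Fin n) R := fromBlocks Q 1 1 0
  have hB : B = M + (1 : R) • 1 := by
    rw [one_smul, ← fromBlocks_one, fromBlocks_add, add_zero, zero_add]
  have hu : B *ᵥ Sum.elim 0 1 = 1 := by
    ext (i | i) <;> simp [B, fromBlocks_mulVec]
  have hK : krylov B 1 (n + n) =
      B * krylov M (Sum.elim 0 1) (n + n) * binomialMatrix (1 : R) (n + n) := by
    rw [← hu, krylov_mulVec_of_commute (Commute.refl _), Matrix.mul_assoc,
      ← krylov_add_smul_one, ← hB]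
  rw [hK, submatrix_mul _ _ _ finSumFinEquiv _ finSumFinEquiv.bijective,
    submatrix_mul _ _ _ id _ Function.bijective_id, submatrix_id_id,
    krylov_fromBlocks_one_one_zero, det_mul, det_mul, det_mul, det_mul, det_submatrix_equiv_self,
    det_binomialMatrix, det_pow, hB_def, det_fromBlocks_one₂₂, det_fromBlocks_zero₂₁]
  simp only [mul_one, add_sub_cancel_right, abs_mul, abs_pow, one_pow,
    abs_det_fromBlocks_one_one_zero, abs_det_map_fibCoeffMatrix]
  ring

end

def sumEquivProdFinTwo (α : Type*) : α ⊕ α ≃ α × Fin 2 where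
  toFun := Sum.elim (·, 0) (·, 1)
  invFun p := if p.2 = 0 then Sum.inl p.1 else Sum.inr p.1
  left_inv := by rintro (a | a) <;> simp
  right_inv := by rintro ⟨a, i⟩; fin_cases i <;> simp

lemma qMat_eq {R : Type} [Ring R] {V : Type} [Fintype V] [DecidableEq V] (H : SimpleGraph V)
    [DecidableRel H.Adj] : qMat R H = diagonal (H.adjMatrix R *ᵥ 1) + H.adjMatrix R := by
  rw [qMat]
  congr 1
  · ext v w
    rw [SimpleGraph.degMatrix, diagonal_apply, diagonal_apply, ← Function.const_one,
      SimpleGraph.adjMatrix_mulVec_const_apply, mul_one]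
    congr!
  · congr!

lemma rootedProd_two_adj {V : Type} (G : SimpleGraph V) (a b : V) (i j : Fin 2) :
    (rootedProd G 2).Adj (a, i) (b, j) ↔ i = 0 ∧ j = 0 ∧ G.Adj a b ∨ a = b ∧ i ≠ j := by
  fin_cases i <;> fin_cases j <;> simp [rootedProd, G.adj_comm, eq_comm]
  exact G.ne_of_adj

section

variable {R : Type} [Ring R] {n : ℕ} (G : SimpleGraph (Fin n))

lemma adjMatrix_rootedProd_two_submatrix [DecidableRel G.Adj]
    [DecidableRel (rootedProd G 2).Adj] :
    ((rootedProd G 2).adjMatrix R).submatrix (sumEquivProdFinTwo _) (sumEquivProdFinTwo _) =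
      fromBlocks (G.adjMatrix R) 1 1 0 := by
  ext (a | a) (b | b) <;> simp [sumEquivProdFinTwo, rootedProd_two_adj, one_apply]

lemma qMat_rootedProd_two_submatrix :
    (qMat R (rootedProd G 2)).submatrix (sumEquivProdFinTwo _) (sumEquivProdFinTwo _) =
      fromBlocks (qMat R G + 1) 1 1 1 := by
  classical
  have hsub (A : Matrix (Fin n × Fin 2) (Fin n × Fin 2) R) :
      (diagonal (A *ᵥ 1) + A).submatrix (sumEquivProdFinTwo _) (sumEquivProdFinTwo _) =
        diagonal (A.submatrix (sumEquivProdFinTwo _) (sumEquivProdFinTwo _) *ᵥ 1) +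
          A.submatrix (sumEquivProdFinTwo _) (sumEquivProdFinTwo _) := by
    ext s t
    simp [submatrix_mulVec_equiv, diagonal_apply, (sumEquivProdFinTwo _).injective.eq_iff]
  rw [qMat_eq, qMat_eq, hsub, adjMatrix_rootedProd_two_submatrix]
  ext (a | a) (b | b) <;> simp [fromBlocks_mulVec, diagonal_apply, one_apply]
  split_ifs <;> abel

end

lemma abs_qWalkDet_eq {V κ : Type} [Fintype V] [DecidableEq V] [Fintype κ] [DecidableEq κ]
    (H : SimpleGraph V) {m : ℕ} (f : κ ≃ V) (g : κ ≃ Fin m) :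
    |qWalkDet H| = |((krylov (qMat ℝ H) 1 m).submatrix f g).det| := by
  obtain rfl : Fintype.card V = m := by
    rw [← Fintype.card_congr f, Fintype.card_congr g, Fintype.card_fin]
  have h : (krylov (qMat ℝ H) 1 _).submatrix f g = ((krylov (qMat ℝ H) 1 _).submatrix
      (Fintype.equivFin V).symm id).submatrix (f.trans (Fintype.equivFin V)) g := by
    ext
    simp
  rw [h, abs_det_submatrix_equiv_equiv]
  rfl

/-- `det W_Q(G∘P₂) = ± a₀ (det W_Q(G))²`, where `a₀` is the constant
term of the characteristic polynomial of `Q(G)`. -/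
theorem detWalk_rootedProd_two (n : ℕ) (G : SimpleGraph (Fin n)) :
    ∃ ε : ℝ, (ε = 1 ∨ ε = -1) ∧
      qWalkDet (rootedProd G 2) =
        ε * ((qMat ℝ G).charpoly.coeff 0) * (qWalkDet G) ^ 2 := by
  have hK : (krylov (qMat ℝ (rootedProd G 2)) 1 (n + n)).submatrix (sumEquivProdFinTwo _)
      finSumFinEquiv =
        (krylov (fromBlocks (qMat ℝ G + 1) 1 1 1) 1 (n + n)).submatrix id finSumFinEquiv := by
    rw [← qMat_rootedProd_two_submatrix, ← Pi.one_comp (sumEquivProdFinTwo _), krylov_submatrix,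
      submatrix_submatrix]
    rfl
  have h : |qWalkDet (rootedProd G 2)| = |(qMat ℝ G).charpoly.coeff 0 * qWalkDet G ^ 2| := by
    rw [abs_qWalkDet_eq _ (sumEquivProdFinTwo _) finSumFinEquiv, hK,
      abs_det_krylov_fromBlocks_add_one, abs_mul, abs_pow,
      abs_qWalkDet_eq G (Equiv.refl _) (Equiv.refl _), Equiv.coe_refl, submatrix_id_id,
      det_eq_sign_charpoly_coeff, abs_mul, abs_neg_one_pow, one_mul]
  rcases abs_eq_abs.mp h with h | h
  · exact ⟨1, Or.inl rfl, by rw [h]; ring⟩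
  · exact ⟨-1, Or.inr rfl, by rw [h]; ring⟩
end

section
/- Let G be a simple graph on n vertices, k ≥ 2, λ an eigenvalue of Q(G) with eigenvector x ≠ 0, and t a real number satisfying b_k(t) = λ·a_{k−1}(t). Then the block vector ζ = (a_{k−1}(t)x, a_{k−2}(t)x, …, a₁(t)x, a₀(t)x), with blocks indexed by the k levels of G∘P_k, is nonzero and satisfies Q(G∘P_k)ζ = tζ; in particular, t is an eigenvalue of Q(G∘P_k). -/
open Matrix Polynomial BigOperators

/-- The polynomials `a₀(t)=1`, `a₁(t)=t-1`, `a_s(t)=(t-2)a_{s-1}(t)-a_{s-2}(t)`. -/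
noncomputable def aP : ℕ → ℝ → ℝ
  | 0, _ => 1
  | 1, t => t - 1
  | (s + 2), t => (t - 2) * aP (s + 1) t - aP s t

/-- `f_k(t) = a₀(t) + a₁(t) + ⋯ + a_{k-1}(t)`. -/
noncomputable def fP (k : ℕ) (t : ℝ) : ℝ := ∑ i ∈ Finset.range k, aP i t

/-- `b_k(t) = (t-1)a_{k-1}(t) - a_{k-2}(t)`. -/
noncomputable def bP (k : ℕ) (t : ℝ) : ℝ := (t - 1) * aP (k - 1) t - aP (k - 2) t


open scoped Classical in
lemma qMat_mulVec_apply {V : Type} [Fintype V] [DecidableEq V] (G : SimpleGraph V)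
    (v : V → ℝ) (i : V) :
    (qMat ℝ G *ᵥ v) i = ∑ j, if G.Adj i j then v i + v j else 0 := by
  classical
  show ((G.degMatrix ℝ + G.adjMatrix ℝ) *ᵥ v) i = _
  rw [add_mulVec, Pi.add_apply, SimpleGraph.degMatrix_mulVec_apply,
    SimpleGraph.adjMatrix_mulVec_apply, SimpleGraph.degree_eq_sum_if_adj (R := ℝ)]
  rw [Finset.sum_mul, SimpleGraph.neighborFinset_eq_filter, Finset.sum_filter,
    ← Finset.sum_add_distrib]
  apply Finset.sum_congr rfl
  intro j _
  split_ifs <;> ring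

lemma rootedProd_adj {V : Type} (G : SimpleGraph V) (k : ℕ) (u v : V) (s s' : Fin k) :
    (rootedProd G k).Adj (u, s) (v, s') ↔
      ((s : ℕ) = 0 ∧ (s' : ℕ) = 0 ∧ G.Adj u v) ∨
        (u = v ∧ ((s : ℕ) + 1 = (s' : ℕ) ∨ (s' : ℕ) + 1 = (s : ℕ))) := by
  simp only [rootedProd, SimpleGraph.fromRel_adj, Prod.mk.injEq, ne_eq, not_and]
  constructor
  · rintro ⟨hne, (⟨h1, h2, h3⟩ | ⟨h1, h2⟩) | (⟨h1, h2, h3⟩ | ⟨h1, h2⟩)⟩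
    · exact Or.inl ⟨h2, by rw [← h1]; exact h2, h3⟩
    · exact Or.inr ⟨h1, Or.inl h2⟩
    · exact Or.inl ⟨by rw [← h1]; exact h2, h2, h3.symm⟩
    · exact Or.inr ⟨h1.symm, Or.inr h2⟩
  · rintro (⟨h0, h0', hadj⟩ | ⟨rfl, h | h⟩)
    · exact ⟨fun he => absurd he hadj.ne, Or.inl (Or.inl ⟨Fin.ext (by omega), h0, hadj⟩)⟩
    · exact ⟨fun _ he => by omega, Or.inl (Or.inr ⟨rfl, h⟩)⟩
    · exact ⟨fun _ he => by omega, Or.inr (Or.inr ⟨rfl, h⟩)⟩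

lemma aP_rec (m : ℕ) (hm : 1 ≤ m) (t : ℝ) :
    aP (m + 1) t = (t - 2) * aP m t - aP (m - 1) t := by
  obtain ⟨m', rfl⟩ : ∃ m', m = m' + 1 := ⟨m - 1, by omega⟩
  simp [aP]

open scoped Classical in
lemma sum_pick_up {n k : ℕ} (u : Fin n) (m : ℕ) (c : Fin n → Fin k → ℝ) :
    ∑ v : Fin n, ∑ s' : Fin k, (if u = v ∧ m = (s' : ℕ) then c v s' else 0)
      = if h : m < k then c u ⟨m, h⟩ else 0 := by
  by_cases h : m < k
  · rw [dif_pos h, Finset.sum_eq_single u]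
    · rw [Finset.sum_eq_single (⟨m, h⟩ : Fin k)]
      · simp
      · intro s' _ hs; rw [if_neg]; rintro ⟨-, hc⟩; exact hs (Fin.ext hc.symm)
      · simp
    · intro v _ hv; apply Finset.sum_eq_zero; intro s' _; rw [if_neg]
      rintro ⟨hc, -⟩; exact hv hc.symm
    · simp
  · rw [dif_neg h]
    apply Finset.sum_eq_zero; intro v _; apply Finset.sum_eq_zero; intro s' _
    rw [if_neg]; rintro ⟨-, hc⟩; omega

open scoped Classical in
lemma sum_pick_down {n k : ℕ} (u : Fin n) (m : ℕ) (hmk : m < k) (c : Fin n → Fin k → ℝ) :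
    ∑ v : Fin n, ∑ s' : Fin k, (if u = v ∧ (s' : ℕ) + 1 = m then c v s' else 0)
      = if h : 1 ≤ m then c u ⟨m - 1, by omega⟩ else 0 := by
  by_cases h : 1 ≤ m
  · rw [dif_pos h, Finset.sum_eq_single u]
    · rw [Finset.sum_eq_single (⟨m - 1, by omega⟩ : Fin k)]
      · simp; omega
      · intro s' _ hs; rw [if_neg]; rintro ⟨-, hc⟩; refine hs (Fin.ext ?_); simp; omega
      · simp
    · intro v _ hv; apply Finset.sum_eq_zero; intro s' _; rw [if_neg]
      rintro ⟨hc, -⟩; exact hv hc.symm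
    · simp
  · rw [dif_neg h]
    apply Finset.sum_eq_zero; intro v _; apply Finset.sum_eq_zero; intro s' _
    rw [if_neg]; rintro ⟨-, hc⟩; omega

open scoped Classical in
lemma sum_pick_lvl0 {n k : ℕ} (hk : 0 < k) (P : Fin n → Prop) (c : Fin n → Fin k → ℝ) :
    ∑ v : Fin n, ∑ s' : Fin k, (if (s' : ℕ) = 0 ∧ P v then c v s' else 0)
      = ∑ v : Fin n, if P v then c v ⟨0, hk⟩ else 0 := by
  apply Finset.sum_congr rfl
  intro v _
  rw [Finset.sum_eq_single (⟨0, hk⟩ : Fin k)]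
  · simp
  · intro s' _ hs; rw [if_neg]; rintro ⟨hc, -⟩; exact hs (Fin.ext hc)
  · simp


set_option maxHeartbeats 1000000 in
/-- If `Q(G)x = λx` with `x ≠ 0` and `b_k(t) = λ a_{k-1}(t)`, then the
block vector `ζ = (a_{k-1}(t)x, …, a₁(t)x, a₀(t)x)` is a nonzero eigenvector of
`Q(G∘P_k)` for the eigenvalue `t`; in particular `t` is a Q-eigenvalue of `G∘P_k`. -/
theorem rootedProd_eigenvector (n k : ℕ) (hk : 2 ≤ k) (G : SimpleGraph (Fin n))
    (lam t : ℝ) (x : Fin n → ℝ) (hx : x ≠ 0)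
    (heig : qMat ℝ G *ᵥ x = lam • x)
    (ht : bP k t = lam * aP (k - 1) t) :
    let ζ : Fin n × Fin k → ℝ := fun p => aP (k - 1 - (p.2 : ℕ)) t * x p.1
    ζ ≠ 0 ∧ qMat ℝ (rootedProd G k) *ᵥ ζ = t • ζ ∧
      Module.End.HasEigenvalue (Matrix.mulVecLin (qMat ℝ (rootedProd G k))) t := by
  classical
  intro ζ
  have hζ : ∀ p : Fin n × Fin k, ζ p = aP (k - 1 - (p.2 : ℕ)) t * x p.1 := fun _ => rfl
  rw [bP] at ht
  -- nonzero
  have hzne : ζ ≠ 0 := by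
    obtain ⟨u, hu⟩ : ∃ u, x u ≠ 0 := by
      by_contra h; push_neg at h; exact hx (funext fun u => h u)
    intro h
    have h2 := congrFun h (u, ⟨k - 1, by omega⟩)
    rw [hζ] at h2
    simp only [Pi.zero_apply] at h2
    rw [show k - 1 - ((⟨k - 1, by omega⟩ : Fin k) : ℕ) = 0 from by simp] at h2
    simp [aP] at h2
    exact hu h2
  have hGrow : ∀ u : Fin n, ∑ v, (if G.Adj u v then x u + x v else 0) = lam * x u := by
    intro u
    have h1 := congrFun heig u
    rw [qMat_mulVec_apply] at h1
    simpa using h1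
  -- eigen equation
  have hmv : qMat ℝ (rootedProd G k) *ᵥ ζ = t • ζ := by
    funext p
    obtain ⟨u, s⟩ := p
    rw [qMat_mulVec_apply, Pi.smul_apply, smul_eq_mul, Fintype.sum_prod_type]
    have comb :
        (∑ v : Fin n, ∑ s' : Fin k,
          ((if (s : ℕ) = 0 ∧ (s' : ℕ) = 0 ∧ G.Adj u v then ζ (u, s) + ζ (v, s') else 0)
            + (if u = v ∧ (s : ℕ) + 1 = (s' : ℕ) then ζ (u, s) + ζ (v, s') else 0)
            + (if u = v ∧ (s' : ℕ) + 1 = (s : ℕ) then ζ (u, s) + ζ (v, s') else 0)))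
        = (∑ v : Fin n, ∑ s' : Fin k,
            (if (s : ℕ) = 0 ∧ (s' : ℕ) = 0 ∧ G.Adj u v then ζ (u, s) + ζ (v, s') else 0))
          + (∑ v : Fin n, ∑ s' : Fin k,
            (if u = v ∧ (s : ℕ) + 1 = (s' : ℕ) then ζ (u, s) + ζ (v, s') else 0))
          + (∑ v : Fin n, ∑ s' : Fin k,
            (if u = v ∧ (s' : ℕ) + 1 = (s : ℕ) then ζ (u, s) + ζ (v, s') else 0)) := by
      simp [Finset.sum_add_distrib]
    rw [show (∑ q : Fin n, ∑ q' : Fin k,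
        if (rootedProd G k).Adj (u, s) (q, q') then ζ (u, s) + ζ (q, q') else 0)
        = ∑ v : Fin n, ∑ s' : Fin k,
          ((if (s : ℕ) = 0 ∧ (s' : ℕ) = 0 ∧ G.Adj u v then ζ (u, s) + ζ (v, s') else 0)
            + (if u = v ∧ (s : ℕ) + 1 = (s' : ℕ) then ζ (u, s) + ζ (v, s') else 0)
            + (if u = v ∧ (s' : ℕ) + 1 = (s : ℕ) then ζ (u, s) + ζ (v, s') else 0)) from ?_,
      comb]
    · -- evaluate the three sums
      have hS2 := sum_pick_up (k := k) u ((s : ℕ) + 1) (fun v s' => ζ (u, s) + ζ (v, s'))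
      have hS3 := sum_pick_down (k := k) u (s : ℕ) s.isLt (fun v s' => ζ (u, s) + ζ (v, s'))
      rw [hS2, hS3]
      by_cases hs0 : (s : ℕ) = 0
      · -- bottom level
        have hS1 :
            (∑ v : Fin n, ∑ s' : Fin k,
              (if (s : ℕ) = 0 ∧ (s' : ℕ) = 0 ∧ G.Adj u v then ζ (u, s) + ζ (v, s') else 0))
            = aP (k - 1) t * (lam * x u) := by
          have e : ∀ v : Fin n, ∀ s' : Fin k,
              (if (s : ℕ) = 0 ∧ (s' : ℕ) = 0 ∧ G.Adj u v then ζ (u, s) + ζ (v, s') else 0)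
              = (if (s' : ℕ) = 0 ∧ G.Adj u v then ζ (u, s) + ζ (v, s') else 0) := by
            intro v s'
            exact if_congr (by constructor; exact fun h => h.2; exact fun h => ⟨hs0, h⟩) rfl rfl
          simp only [e]
          rw [sum_pick_lvl0 (by omega) (G.Adj u) (fun v s' => ζ (u, s) + ζ (v, s'))]
          have e2 : ∀ v : Fin n,
              (if G.Adj u v then ζ (u, s) + ζ (v, ⟨0, by omega⟩) else 0)
              = aP (k - 1) t * (if G.Adj u v then x u + x v else 0) := by
            intro v
            rw [hζ, hζ]
            simp only [hs0, Nat.sub_zero]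
            split_ifs <;> ring
          simp only [e2]
          rw [← Finset.mul_sum, hGrow u]
        rw [hS1, dif_pos (show (s : ℕ) + 1 < k by omega), dif_neg (by omega)]
        rw [hζ, hζ]
        simp only [hs0, Nat.sub_zero]
        rw [show k - 1 - (0 + 1) = k - 2 from by omega]
        linear_combination (-(x u)) * ht
      · -- upper levels: S1 = 0
        have hS1 :
            (∑ v : Fin n, ∑ s' : Fin k,
              (if (s : ℕ) = 0 ∧ (s' : ℕ) = 0 ∧ G.Adj u v then ζ (u, s) + ζ (v, s') else 0))
            = 0 := by
          apply Finset.sum_eq_zero; intro v _; apply Finset.sum_eq_zero; intro s' _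
          rw [if_neg]; rintro ⟨hc, -⟩; exact hs0 hc
        rw [hS1, dif_pos (show 1 ≤ (s : ℕ) by omega)]
        by_cases hsN : (s : ℕ) = k - 1
        · -- top level
          rw [dif_neg (by omega)]
          rw [hζ, hζ]
          simp only [hsN]
          rw [show k - 1 - (k - 1) = 0 from by omega,
            show k - 1 - ((⟨k - 1 - 1, by omega⟩ : Fin k) : ℕ) = 1 from by simp; omega]
          simp [aP]; ring
        · -- middle levels
          rw [dif_pos (show (s : ℕ) + 1 < k by omega)]
          rw [hζ, hζ, hζ]
          rw [show k - 1 - ((⟨(s : ℕ) + 1, by omega⟩ : Fin k) : ℕ) = (k - 1 - (s : ℕ)) - 1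
              from by simp; omega,
            show k - 1 - ((⟨(s : ℕ) - 1, by omega⟩ : Fin k) : ℕ) = (k - 1 - (s : ℕ)) + 1
              from by simp; omega]
          have hM1 : 1 ≤ k - 1 - (s : ℕ) := by omega
          linear_combination (x u) * (aP_rec (k - 1 - (s : ℕ)) hM1 t)
    · -- pointwise split of the adjacency condition
      apply Finset.sum_congr rfl; intro v _; apply Finset.sum_congr rfl; intro s' _
      have d12 : ¬(((s : ℕ) = 0 ∧ (s' : ℕ) = 0 ∧ G.Adj u v) ∧ (u = v ∧ (s : ℕ) + 1 = (s' : ℕ))) := by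
        rintro ⟨⟨-, -, ha⟩, ⟨he, -⟩⟩; exact ha.ne he
      have d13 : ¬(((s : ℕ) = 0 ∧ (s' : ℕ) = 0 ∧ G.Adj u v) ∧ (u = v ∧ (s' : ℕ) + 1 = (s : ℕ))) := by
        rintro ⟨⟨-, -, ha⟩, ⟨he, -⟩⟩; exact ha.ne he
      have d23 : ¬((u = v ∧ (s : ℕ) + 1 = (s' : ℕ)) ∧ (u = v ∧ (s' : ℕ) + 1 = (s : ℕ))) := by
        rintro ⟨⟨-, h1⟩, ⟨-, h2⟩⟩; omega
      simp only [rootedProd_adj, and_or_left]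
      by_cases c1 : (s : ℕ) = 0 ∧ (s' : ℕ) = 0 ∧ G.Adj u v
      · rw [if_pos c1, if_pos (Or.inl c1), if_neg (fun c2 => d12 ⟨c1, c2⟩),
          if_neg (fun c3 => d13 ⟨c1, c3⟩)]; ring
      · by_cases c2 : u = v ∧ (s : ℕ) + 1 = (s' : ℕ)
        · rw [if_neg c1, if_pos c2, if_pos (Or.inr (Or.inl c2)),
            if_neg (fun c3 => d23 ⟨c2, c3⟩)]; ring
        · by_cases c3 : u = v ∧ (s' : ℕ) + 1 = (s : ℕ)
          · rw [if_neg c1, if_neg c2, if_pos c3, if_pos (Or.inr (Or.inr c3))]; ring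
          · rw [if_neg c1, if_neg c2, if_neg c3,
              if_neg (fun h => h.elim c1 (fun h' => h'.elim c2 c3))]; ring
  exact ⟨hzne, hmv,
    Module.End.hasEigenvalue_of_hasEigenvector
      ⟨Module.End.mem_eigenspace_iff.mpr (by simpa [Matrix.mulVecLin_apply] using hmv), hzne⟩⟩
end
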